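/- arXiv:1505.00377 — 2 statements merged into one kernel-verified Lean document; each statement's English description precedes it below -/
import Mathlib

section
/- Let p be a prime, k a field of characteristic p, and a, b ∈ k with a ≠ b. Then the homomorphisms ρ_a and ρ_b from ZMod p × ZMod p to GL₂(k) are not conjugate: there is no g ∈ GL₂(k) with g · ρ_a(x) · g⁻¹ = ρ_b(x) for all x ∈ ZMod p × ZMod p. -/
/-- The unitriangular matrix `[[1, x], [0, 1]]` as an element of `GL₂(k)`. -/
def unitri {k : Type*} [Field k] (x : k) : GL (Fin 2) k :=
  ⟨!![1, x; 0, 1], !![1, -x; 0, 1],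
    by ext i j; fin_cases i <;> fin_cases j <;>
      simp [Matrix.mul_apply, Fin.sum_univ_two],
    by ext i j; fin_cases i <;> fin_cases j <;>
      simp [Matrix.mul_apply, Fin.sum_univ_two]⟩

/-- For `a ∈ k`, the map `ρ_a : ZMod p × ZMod p → GL₂(k)`, `(i, j) ↦ u(ī + a·j̄)`,
where `ī, j̄` are the images of `i, j` under the canonical ring hom `ZMod p → k`. -/
def rhoA (p : ℕ) {k : Type*} [Field k] [CharP k p] (a : k) :
    ZMod p × ZMod p → GL (Fin 2) k :=
  fun x => unitri (ZMod.castHom (dvd_refl p) k x.1 + a * ZMod.castHom (dvd_refl p) k x.2)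

/-- if `a ≠ b` then the homomorphisms `ρ_a` and `ρ_b` from
`ZMod p × ZMod p` to `GL₂(k)` are not conjugate. -/
theorem rhoA_not_conjugate_of_ne (p : ℕ) [Fact p.Prime] {k : Type*} [Field k]
    [CharP k p] (a b : k) (hab : a ≠ b) :
    ¬ ∃ g : GL (Fin 2) k, ∀ x : ZMod p × ZMod p,
        g * rhoA p a x * g⁻¹ = rhoA p b x := by

  rintro ⟨g, hg⟩
  have h1 := hg (1, 0)
  have h2 := hg (0, 1)
  rw [mul_inv_eq_iff_eq_mul] at h1 h2
  simp only [rhoA, map_one, map_zero, mul_zero, mul_one, add_zero, zero_add] at h1 h2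
  have m1 : (g : Matrix (Fin 2) (Fin 2) k) * !![1,1;0,1] = !![1,1;0,1] * (g : Matrix (Fin 2) (Fin 2) k) :=
    congrArg Units.val h1
  have m2 : (g : Matrix (Fin 2) (Fin 2) k) * !![1,a;0,1] = !![1,b;0,1] * (g : Matrix (Fin 2) (Fin 2) k) :=
    congrArg Units.val h2
  set M : Matrix (Fin 2) (Fin 2) k := (g : Matrix (Fin 2) (Fin 2) k) with hM
  have e00 := congrFun (congrFun m1 0) 0
  have e01 := congrFun (congrFun m1 0) 1
  simp [Matrix.mul_apply, Fin.sum_univ_two] at e00 e01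
  -- e00 : M 0 0 = M 0 0 + M 1 0, so M 1 0 = 0
  have h10 : M 1 0 = 0 := by linear_combination e00
  have hdiag : M 0 0 = M 1 1 := by linear_combination e01
  have f01 := congrFun (congrFun m2 0) 1
  simp [Matrix.mul_apply, Fin.sum_univ_two] at f01
  -- f01 : M 0 0 * a + M 0 1 = M 0 1 + b * M 1 1
  have hdet : M.det ≠ 0 := (Matrix.isUnit_iff_isUnit_det M).mp g.isUnit |>.ne_zero
  have h00 : M 0 0 ≠ 0 := by
    intro h
    apply hdet
    rw [Matrix.det_fin_two, h10, ← hdiag, h]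
    ring
  apply hab
  have : M 0 0 * a = M 0 0 * b := by
    rw [hdiag] at f01 ⊢
    linear_combination f01
  exact mul_left_cancel₀ (hdiag ▸ h00) this
end

section
/- Let p be a prime and k an infinite field of characteristic p. Then the homomorphisms from ZMod p × ZMod p to GL₂(k) do not fall into finitely many conjugacy classes: there is no finite set S of group homomorphisms ZMod p × ZMod p → GL₂(k) such that every group homomorphism ZMod p × ZMod p → GL₂(k) is GL₂(k)-conjugate to a member of S. -/
section Aux

variable {k : Type*} [Field k]

/-- The unipotent upper triangular matrix `!![1, c; 0, 1]` as a unit. -/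
def unipGL (c : k) : GL (Fin 2) k :=
  ⟨!![1, c; 0, 1], !![1, -c; 0, 1],
    by rw [Matrix.mul_fin_two, Matrix.one_fin_two]; norm_num,
    by rw [Matrix.mul_fin_two, Matrix.one_fin_two]; norm_num⟩

lemma unipGL_mul (a b : k) : unipGL a * unipGL b = unipGL (a + b) := by
  apply Units.ext
  show (!![1, a; 0, 1] : Matrix (Fin 2) (Fin 2) k) * !![1, b; 0, 1] = !![1, a + b; 0, 1]
  rw [Matrix.mul_fin_two]
  norm_num [add_comm]

lemma unipGL_zero : unipGL (0 : k) = 1 := by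
  apply Units.ext
  show (!![1, (0:k); 0, 1] : Matrix (Fin 2) (Fin 2) k) = 1
  rw [Matrix.one_fin_two]

variable (p : ℕ) [Fact p.Prime] [CharP k p]

/-- The homomorphism sending `(a, b)` to `!![1, a + t b; 0, 1]`. -/
def rhoT (t : k) : Multiplicative (ZMod p × ZMod p) →* GL (Fin 2) k where
  toFun x := unipGL ((ZMod.castHom dvd_rfl k) x.toAdd.1 + t * (ZMod.castHom dvd_rfl k) x.toAdd.2)
  map_one' := by simp [unipGL_zero]
  map_mul' x y := by
    rw [unipGL_mul]
    simp only [toAdd_mul, Prod.fst_add, Prod.snd_add, map_add]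
    ring_nf

lemma rhoT_inj (t s : k) (g : GL (Fin 2) k)
    (h : ∀ x, g * rhoT p t x * g⁻¹ = rhoT p s x) : t = s := by
  set A : Matrix (Fin 2) (Fin 2) k := g.val with hA
  have key : ∀ c c' : k, unipGL c' * g = g * unipGL c →
      ∀ i j : Fin 2, (!![1,c';0,1] * A) i j = (A * !![1,c;0,1]) i j := by
    intro c c' hc i j
    have h3 : (unipGL c' * g).val = (g * unipGL c).val := by rw [hc]
    have h4 : (!![1,c';0,1] : Matrix (Fin 2) (Fin 2) k) * A = A * !![1,c;0,1] := h3
    rw [h4]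
  -- specialize the conjugacy at the two generators
  have h1 := h (Multiplicative.ofAdd ((1 : ZMod p), (0 : ZMod p)))
  have h2 := h (Multiplicative.ofAdd ((0 : ZMod p), (1 : ZMod p)))
  simp only [rhoT, MonoidHom.coe_mk, OneHom.coe_mk, toAdd_ofAdd, map_one, map_zero,
    mul_zero, add_zero, mul_one, zero_add] at h1 h2
  rw [mul_inv_eq_iff_eq_mul] at h1 h2
  have e00 := key 1 1 h1.symm 0 0
  have e01 := key 1 1 h1.symm 0 1
  have f01 := key t s h2.symm 0 1
  simp only [Matrix.mul_apply, Fin.sum_univ_two, Matrix.cons_val', Matrix.cons_val_zero,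
    Matrix.cons_val_one, Matrix.head_cons, Matrix.head_fin_const, Matrix.empty_val',
    Matrix.cons_val_fin_one, Matrix.of_apply, one_mul, mul_one, zero_mul, mul_zero,
    add_zero, zero_add] at e00 e01 f01
  have hA10 : A 1 0 = 0 := by linear_combination e00
  have hA11 : A 1 1 = A 0 0 := by linear_combination e01
  have ht : A 0 0 * s = A 0 0 * t := by
    linear_combination f01 - s * hA11
  have hdet : A.det ≠ 0 := by
    have : IsUnit A.det := A.isUnit_iff_isUnit_det.mp g.isUnit
    exact this.ne_zero
  have hA00 : A 0 0 ≠ 0 := by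
    intro h0
    apply hdet
    rw [Matrix.det_fin_two, hA10, hA11, h0]
    ring
  exact (mul_left_cancel₀ hA00 ht).symm

end Aux

/-- if `k` is an infinite field of characteristic `p` (a prime), then the
group homomorphisms `ZMod p × ZMod p → GL₂(k)` do not fall into finitely many
conjugacy classes: there is no finite set `S` of homomorphisms such that every
homomorphism is `GL₂(k)`-conjugate to a member of `S`. -/
theorem not_finitely_many_conjugacy_classes_of_homs (p : ℕ) [Fact p.Prime]
    {k : Type*} [Field k] [CharP k p] [Infinite k] :
    ¬ ∃ S : Set (Multiplicative (ZMod p × ZMod p) →* GL (Fin 2) k), S.Finite ∧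
        ∀ ρ : Multiplicative (ZMod p × ZMod p) →* GL (Fin 2) k,
          ∃ μ ∈ S, ∃ g : GL (Fin 2) k,
            ∀ x : Multiplicative (ZMod p × ZMod p), g * ρ x * g⁻¹ = μ x := by
  rintro ⟨S, hfin, hall⟩
  haveI : Finite ↥S := hfin.to_subtype
  have choice : ∀ t : k, ∃ μ : ↥S, ∃ g : GL (Fin 2) k,
      ∀ x, g * rhoT p t x * g⁻¹ = (μ : Multiplicative (ZMod p × ZMod p) →* GL (Fin 2) k) x := by
    intro t
    obtain ⟨μ, hμS, g, hg⟩ := hall (rhoT p t)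
    exact ⟨⟨μ, hμS⟩, g, hg⟩
  choose m g hm using choice
  obtain ⟨t, s, hts, hmts⟩ := Finite.exists_ne_map_eq_of_infinite m
  apply hts
  apply rhoT_inj p t s ((g s)⁻¹ * g t)
  intro x
  have h1 := hm t x
  have h2 := hm s x
  rw [hmts] at h1
  rw [mul_inv_rev, inv_inv]
  calc (g s)⁻¹ * g t * rhoT p t x * ((g t)⁻¹ * g s)
      = (g s)⁻¹ * (g t * rhoT p t x * (g t)⁻¹) * g s := by group
    _ = (g s)⁻¹ * (g s * rhoT p s x * (g s)⁻¹) * g s := by rw [h1, h2]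
    _ = rhoT p s x := by group
end
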